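/- arXiv:1408.4581 — 2 statements merged into one kernel-verified Lean document; each statement's English description precedes it below -/
import Mathlib

section
/- Let 0<p₀,p₁<∞, 0<q₀,q₁≤∞, α,γ∈ℝ, and let ∇ be a multiscale grid of dimension d∈ℕ satisfying (A4b) (i.e. #∇_j = ∞ for all j∈ℕ₀). Then the following are equivalent: (i) b^{α+γ}_{p₀,q₀}(∇) ⊆ b^{α}_{p₁,q₁}(∇) as sets; (ii) the identity map from b^{α+γ}_{p₀,q₀}(∇) into b^{α}_{p₁,q₁}(∇) is continuous; (iii) p₀ ≤ p₁ and in addition either γ > d·max{0, 1/p₀ − 1/p₁}, or γ = d·max{0, 1/p₀ − 1/p₁} and q₀ ≤ q₁. -/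
open scoped ENNReal NNReal BigOperators

noncomputable section

/-- A multiscale grid of dimension `d` for the metric space `Γ` with finite type set `T`,
in the sense of Definition 2.1 (assumptions (A1)–(A3)). -/
structure MultiscaleGrid (Γ : Type*) [MetricSpace Γ] (T : Type*) [Fintype T] [Nonempty T]
    (d : ℕ) where
  grid : ℕ → Set (Γ × T)
  c₁ : ℝ
  c₁_pos : 0 < c₁
  /-- (A1): `∇_j` is a `c₁·2^{-j}`-net for `Γ × T` w.r.t. the pseudometric
  `dist((y,t),(y',t')) = ρ_Γ(y,y')`. -/
  net : ∀ (j : ℕ) (x : Γ × T), ∃ ξ ∈ grid j, dist ξ.1 x.1 ≤ c₁ / 2 ^ j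
  c₂ : ℝ
  c₂_pos : 0 < c₂
  sepBound : ℕ
  /-- (A2): uniform well-separatedness. -/
  sep : ∀ (j : ℕ), ∀ ξ ∈ grid j,
    {ξ' ∈ grid j | dist ξ.1 ξ'.1 ≤ c₂ / 2 ^ j}.Finite ∧
      ({ξ' ∈ grid j | dist ξ.1 ξ'.1 ≤ c₂ / 2 ^ j}).ncard ≤ sepBound
  c₃ : ℝ
  c₃_pos : 0 < c₃
  dimA : ℝ
  dimB : ℝ
  dimA_pos : 0 < dimA
  dimA_le_dimB : dimA ≤ dimB
  /-- (A3), upper bound: uniform `d`-dimensionality. -/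
  dim_upper : ∀ (j : ℕ), ∀ ξ ∈ grid j,
    {ξ' ∈ grid j | dist ξ.1 ξ'.1 ≤ c₃}.Finite ∧
      (({ξ' ∈ grid j | dist ξ.1 ξ'.1 ≤ c₃}).ncard : ℝ) ≤ dimB * 2 ^ (d * j)
  /-- (A3), lower bound. -/
  dim_lower : ∀ j : ℕ, ∃ ξ ∈ grid j,
    dimA * 2 ^ (d * j) ≤ (({ξ' ∈ grid j | dist ξ.1 ξ'.1 ≤ c₃}).ncard : ℝ)

variable {Γ T : Type*} [MetricSpace Γ] [Fintype T] [Nonempty T] {d : ℕ}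

/-- The weight `2^{j(α + d(1/2 - 1/p))}` appearing in the Besov sequence quasi-norm. -/
def besovWeight (d : ℕ) (α p : ℝ) (j : ℕ) : ℝ≥0∞ :=
  ENNReal.ofReal ((2 : ℝ) ^ ((j : ℝ) * (α + d * (1 / 2 - 1 / p))))

/-- The level-`j` `ℓ_p` norm `(Σ_{ξ∈∇_j} |a_{(j,ξ)}|^p)^{1/p}` (as an `ℝ≥0∞`-valued quantity). -/
def levelNorm (N : MultiscaleGrid Γ T d) (p : ℝ) (a : ℕ → Γ × T → ℂ) (j : ℕ) : ℝ≥0∞ :=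
  (∑' ξ : N.grid j, (‖a j ↑ξ‖₊ : ℝ≥0∞) ^ p) ^ (1 / p)

/-- The Besov sequence quasi-norm `‖a | b^α_{p,q}(∇)‖` (value `∞` allowed; `q ∈ (0,∞]`). -/
def besovNorm (N : MultiscaleGrid Γ T d) (α p : ℝ) (q : ℝ≥0∞)
    (a : ℕ → Γ × T → ℂ) : ℝ≥0∞ :=
  if q = ∞ then ⨆ j, besovWeight d α p j * levelNorm N p a j
  else (∑' j, (besovWeight d α p j * levelNorm N p a j) ^ q.toReal) ^ (1 / q.toReal)

/-- The Besov sequence space `b^α_{p,q}(∇)` as a set of coefficient arrays. -/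
def besovSpace (N : MultiscaleGrid Γ T d) (α p : ℝ) (q : ℝ≥0∞) :
    Set (ℕ → Γ × T → ℂ) :=
  {a | besovNorm N α p q a < ∞}

/-- `σ_p = d·max{1/p − 1, 0}`. -/
def sigmaP (d : ℕ) (p : ℝ) : ℝ := d * max (1 / p - 1) 0

/-- The almost-diagonality majorant `ω_{(j,ξ),(k,η)}(ε)`. -/
def adWeight (d : ℕ) (p α₀ α₁ ε : ℝ) (j : ℕ) (ξ : Γ × T) (k : ℕ) (η : Γ × T) : ℝ :=
  (2 : ℝ) ^ ((k : ℝ) * α₀ - (j : ℝ) * α₁) *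
    min ((2 : ℝ) ^ (-((j : ℝ) - (k : ℝ)) * ((d : ℝ) / 2 + ε)))
        ((2 : ℝ) ^ (((j : ℝ) - (k : ℝ)) * ((d : ℝ) / 2 + ε + sigmaP d p))) /
    (1 + min ((2 : ℝ) ^ k) ((2 : ℝ) ^ j) * dist ξ.1 η.1) ^ ((d : ℝ) + ε + sigmaP d p)

/-- The almost-diagonality estimate with fixed witnesses `ε` and `C`. -/
def adBound (N0 N1 : MultiscaleGrid Γ T d) (α₀ α₁ p ε C : ℝ)
    (m : ℕ → Γ × T → ℕ → Γ × T → ℂ) : Prop :=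
  ∀ j : ℕ, ∀ ξ ∈ N1.grid j, ∀ k : ℕ, ∀ η ∈ N0.grid k,
    ‖m j ξ k η‖ ≤ C * adWeight d p α₀ α₁ ε j ξ k η

/-- `M ∈ ad^{α₀,α₁}_p`: the matrix is almost diagonal between `b^{α₀}_{p,q}(∇⁰)` and
`b^{α₁}_{p,q}(∇¹)`. -/
def isAlmostDiagonal (N0 N1 : MultiscaleGrid Γ T d) (α₀ α₁ p : ℝ)
    (m : ℕ → Γ × T → ℕ → Γ × T → ℂ) : Prop :=
  ∃ ε > 0, ∃ C > 0, adBound N0 N1 α₀ α₁ p ε C m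

/-- (A4a): `#∇_j ∼ 2^{dj}`. -/
def A4a (N : MultiscaleGrid Γ T d) : Prop :=
  ∃ A B : ℝ, 0 < A ∧ A ≤ B ∧ ∀ j : ℕ, (N.grid j).Finite ∧
    A * 2 ^ (d * j) ≤ ((N.grid j).ncard : ℝ) ∧ ((N.grid j).ncard : ℝ) ≤ B * 2 ^ (d * j)

/-- (A4b): `#∇_j = ∞` for all `j`. -/
def A4b (N : MultiscaleGrid Γ T d) : Prop := ∀ j : ℕ, (N.grid j).Infinite

/-- Admissibility of the parameter tuple `(α,p,q)` for the grid `∇`. -/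
def Admissible (N : MultiscaleGrid Γ T d) (α p : ℝ) (q : ℝ≥0∞) : Prop :=
  0 < p ∧ (A4b N → p ≤ 2) ∧
    ((d * max 0 (1 / p - 1 / 2) < α ∧ 0 < q) ∨
      (α = d * max 0 (1 / p - 1 / 2) ∧ 0 < q ∧ q ≤ 2))

/-!
The Besov quasi-norm is an `ℓ^q`-norm over levels of weighted `ℓ^p`-norms over each level.
Sufficiency: `ℓ^{p₀} ⊆ ℓ^{p₁}` contractively for `p₀ ≤ p₁`, and the level weights of the two
spaces differ by the factor `2^{-jδ}` with `δ = γ - d (1/p₀ - 1/p₁)`; for `δ > 0` this factor is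
`ℓ^{q₁}`-summable, for `δ = 0` one uses `ℓ^{q₀} ⊆ ℓ^{q₁}`.
Necessity, using that every level is infinite: for `p₁ < p₀` put the sequence `(n + 1)^{-1/p₁}`
on level `0`; otherwise put one coefficient on each level, with profile `2^{jδ/2}` if `δ < 0` and
`(j + 1)^{-1/q₁}` if `δ = 0` and `q₁ < q₀`.
-/
open Function

section SequenceNorms

variable {ι : Type*}

def ellNorm' (p : ℝ) (f : ι → ℝ≥0∞) : ℝ≥0∞ := (∑' i, f i ^ p) ^ (1 / p)

def ellNorm (q : ℝ≥0∞) (f : ι → ℝ≥0∞) : ℝ≥0∞ :=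
  if q = ∞ then ⨆ i, f i else ellNorm' q.toReal f

lemma ENNReal.rpow_rpow_one_div {p : ℝ} (hp : p ≠ 0) (x : ℝ≥0∞) : (x ^ p) ^ (1 / p) = x := by
  rw [one_div, ENNReal.rpow_rpow_inv hp]

lemma ellNorm'_lt_top_iff {p : ℝ} (hp : 0 < p) {f : ι → ℝ≥0∞} :
    ellNorm' p f < ∞ ↔ ∑' i, f i ^ p < ∞ :=
  ENNReal.rpow_lt_top_iff_of_pos (one_div_pos.mpr hp)

lemma le_ellNorm' {p : ℝ} (hp : 0 < p) (f : ι → ℝ≥0∞) (i : ι) : f i ≤ ellNorm' p f := by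
  calc f i = (f i ^ p) ^ (1 / p) := (ENNReal.rpow_rpow_one_div hp.ne' _).symm
    _ ≤ ellNorm' p f := ENNReal.rpow_le_rpow (ENNReal.le_tsum i) (by positivity)

lemma ellNorm'_mono {p : ℝ} (hp : 0 ≤ p) {f g : ι → ℝ≥0∞} (h : ∀ i, f i ≤ g i) :
    ellNorm' p f ≤ ellNorm' p g := by
  unfold ellNorm'
  gcongr with i
  exact h i

lemma ellNorm'_mul_const {p : ℝ} (hp : 0 < p) (f : ι → ℝ≥0∞) (c : ℝ≥0∞) :
    ellNorm' p (fun i => f i * c) = ellNorm' p f * c := by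
  simp only [ellNorm', ENNReal.mul_rpow_of_nonneg _ _ hp.le, ENNReal.tsum_mul_right,
    ENNReal.mul_rpow_of_nonneg _ _ (one_div_pos.mpr hp).le, ENNReal.rpow_rpow_one_div hp.ne']

lemma ellNorm'_single [DecidableEq ι] {p : ℝ} (hp : 0 < p) (i : ι) (x : ℝ≥0∞) :
    ellNorm' p (Pi.single i x) = x := by
  have : (fun k => Pi.single i x k ^ p) = Pi.single i (x ^ p) := by
    ext k
    rcases eq_or_ne k i with rfl | hk
    · simp
    · simp [hk, ENNReal.zero_rpow_of_pos hp]
  rw [ellNorm', this, tsum_pi_single, ENNReal.rpow_rpow_one_div hp.ne']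

lemma ellNorm'_extend_zero {κ : Type*} {p : ℝ} (hp : 0 < p) {g : κ → ι} (hg : Injective g)
    (f : κ → ℝ≥0∞) : ellNorm' p (extend g f 0) = ellNorm' p f := by
  have : (fun i => extend g f 0 i ^ p) = extend g (fun k => f k ^ p) 0 := by
    ext i
    rw [apply_extend (· ^ p)]
    simp [comp_def, ENNReal.zero_rpow_of_pos hp]
    rfl
  rw [ellNorm', this, tsum_extend_zero hg]
  rfl

/-- With `S = ∑ f i ^ p`, every `f i ^ p ≤ S`, so `f i ^ r ≤ f i ^ p * S ^ ((r - p) / p)`. -/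
lemma ellNorm'_anti {p r : ℝ} (hp : 0 < p) (hpr : p ≤ r) (f : ι → ℝ≥0∞) :
    ellNorm' r f ≤ ellNorm' p f := by
  have hr : 0 < r := hp.trans_le hpr
  set S := ∑' i, f i ^ p
  have key : ∀ i, f i ^ r ≤ f i ^ p * S ^ ((r - p) / p) := fun i => by
    have hfi : f i ≤ S ^ (1 / p) := le_ellNorm' hp f i
    calc f i ^ r = f i ^ p * f i ^ (r - p) := by
          rw [← ENNReal.rpow_add_of_nonneg _ _ hp.le (by linarith), add_sub_cancel]
      _ ≤ f i ^ p * (S ^ (1 / p)) ^ (r - p) := by gcongr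
      _ = f i ^ p * S ^ ((r - p) / p) := by rw [← ENNReal.rpow_mul, one_div_mul_eq_div]
  calc ellNorm' r f ≤ (∑' i, f i ^ p * S ^ ((r - p) / p)) ^ (1 / r) :=
        ENNReal.rpow_le_rpow (ENNReal.tsum_le_tsum key) (one_div_pos.mpr hr).le
    _ = (S ^ (r / p)) ^ (1 / r) := by
        rw [ENNReal.tsum_mul_right, show r / p = 1 + (r - p) / p by field_simp; ring,
          ENNReal.rpow_add_of_nonneg _ _ zero_le_one (div_nonneg (by linarith) hp.le),
          ENNReal.rpow_one]
    _ = ellNorm' p f := by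
        rw [← ENNReal.rpow_mul]; congr 1; field_simp

lemma le_ellNorm {q : ℝ≥0∞} (hq : 0 < q) (f : ι → ℝ≥0∞) (i : ι) : f i ≤ ellNorm q f := by
  unfold ellNorm
  split_ifs with h
  · exact le_iSup f i
  · exact le_ellNorm' (ENNReal.toReal_pos hq.ne' h) f i

lemma iSup_le_ellNorm {q : ℝ≥0∞} (hq : 0 < q) (f : ι → ℝ≥0∞) : ⨆ i, f i ≤ ellNorm q f :=
  iSup_le (le_ellNorm hq f)

lemma ellNorm_mono {q : ℝ≥0∞} {f g : ι → ℝ≥0∞} (h : ∀ i, f i ≤ g i) :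
    ellNorm q f ≤ ellNorm q g := by
  unfold ellNorm
  split_ifs
  · exact iSup_mono h
  · exact ellNorm'_mono ENNReal.toReal_nonneg h

lemma ellNorm_anti {q₀ q₁ : ℝ≥0∞} (hq₀ : 0 < q₀) (hq : q₀ ≤ q₁) (f : ι → ℝ≥0∞) :
    ellNorm q₁ f ≤ ellNorm q₀ f := by
  rcases eq_or_ne q₁ ∞ with rfl | h₁
  · rw [ellNorm, if_pos rfl]
    exact iSup_le_ellNorm hq₀ f
  · have h₀ : q₀ ≠ ∞ := ne_top_of_le_ne_top h₁ hq
    rw [ellNorm, if_neg h₁, ellNorm, if_neg h₀]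
    exact ellNorm'_anti (ENNReal.toReal_pos hq₀.ne' h₀) (ENNReal.toReal_mono h₁ hq) f

lemma ellNorm_mul_const {q : ℝ≥0∞} (hq : 0 < q) (f : ι → ℝ≥0∞) (c : ℝ≥0∞) :
    ellNorm q (fun i => f i * c) = ellNorm q f * c := by
  unfold ellNorm
  split_ifs with h
  · exact (ENNReal.iSup_mul f c).symm
  · exact ellNorm'_mul_const (ENNReal.toReal_pos hq.ne' h) f c

lemma ellNorm_single [DecidableEq ι] {q : ℝ≥0∞} (hq : 0 < q) (i : ι) (x : ℝ≥0∞) :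
    ellNorm q (Pi.single i x) = x := by
  unfold ellNorm
  split_ifs with h
  · refine le_antisymm (iSup_le fun k => ?_) (by simpa using le_iSup (Pi.single i x) i)
    rcases eq_or_ne k i with rfl | hk <;> simp [*]
  · exact ellNorm'_single (ENNReal.toReal_pos hq.ne' h) i x

end SequenceNorms

lemma ENNReal.ofReal_two_rpow_natCast_mul (x : ℝ) (j : ℕ) :
    ENNReal.ofReal (2 ^ ((j : ℝ) * x)) = ENNReal.ofReal (2 ^ x) ^ j := by
  rw [mul_comm, Real.rpow_mul zero_le_two, Real.rpow_natCast, ENNReal.ofReal_pow (by positivity)]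

lemma ellNorm_two_rpow_lt_top {q : ℝ≥0∞} (hq : 0 < q) {x : ℝ} (hx : x < 0) :
    ellNorm q (fun j : ℕ => ENNReal.ofReal (2 ^ ((j : ℝ) * x))) < ∞ := by
  have hr : ENNReal.ofReal (2 ^ x) < 1 :=
    ENNReal.ofReal_lt_one.mpr (Real.rpow_lt_one_of_one_lt_of_neg one_lt_two hx)
  simp only [ENNReal.ofReal_two_rpow_natCast_mul]
  unfold ellNorm
  split_ifs with h
  · exact (iSup_le fun j => pow_le_one₀ zero_le hr.le).trans_lt ENNReal.one_lt_top
  · have ht : 0 < q.toReal := ENNReal.toReal_pos hq.ne' h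
    have hcomm (j : ℕ) : (ENNReal.ofReal (2 ^ x) ^ j) ^ q.toReal
        = (ENNReal.ofReal (2 ^ x) ^ q.toReal) ^ j := by
      rw [← ENNReal.rpow_natCast, ← ENNReal.rpow_natCast, ← ENNReal.rpow_mul, ← ENNReal.rpow_mul,
        mul_comm]
    rw [ellNorm'_lt_top_iff ht, tsum_congr hcomm, ENNReal.tsum_geometric]
    exact ENNReal.inv_lt_top.mpr (tsub_pos_of_lt (ENNReal.rpow_lt_one hr ht))

lemma iSup_two_rpow_eq_top {x : ℝ} (hx : 0 < x) :
    ⨆ j : ℕ, ENNReal.ofReal (2 ^ ((j : ℝ) * x)) = ∞ := by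
  refine iSup_eq_top.mpr fun b hb => ?_
  obtain ⟨j, hj⟩ := pow_unbounded_of_one_lt b.toReal (Real.one_lt_rpow one_lt_two hx)
  refine ⟨j, ?_⟩
  rw [mul_comm, Real.rpow_mul zero_le_two, Real.rpow_natCast]
  exact (ENNReal.lt_ofReal_iff_toReal_lt hb.ne).mpr hj

lemma tsum_ofReal_nat_add_one_rpow_neg_lt_top_iff {s : ℝ} :
    ∑' n : ℕ, ENNReal.ofReal (((n : ℝ) + 1) ^ (-s)) < ∞ ↔ 1 < s := by
  have hsummable : Summable (fun n : ℕ => ((n : ℝ) + 1) ^ (-s)) ↔ 1 < s := by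
    rw [← Real.summable_one_div_nat_add_rpow 1 s]
    refine summable_congr fun n => ?_
    rw [abs_of_pos (by positivity), Real.rpow_neg (by positivity), one_div]
  rw [← hsummable]
  refine ⟨fun h => ?_, fun h => h.tsum_ofReal_lt_top⟩
  refine (ENNReal.summable_toReal h.ne).congr fun n => ?_
  exact ENNReal.toReal_ofReal (by positivity)

def borderlineSeq (r : ℝ) (n : ℕ) : ℝ≥0∞ := ENNReal.ofReal (((n : ℝ) + 1) ^ (-r⁻¹))

lemma borderlineSeq_le_one {r : ℝ} (hr : 0 ≤ r) (n : ℕ) : borderlineSeq r n ≤ 1 :=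
  ENNReal.ofReal_le_one.mpr <| Real.rpow_le_one_of_one_le_of_nonpos
    (le_add_of_nonneg_left n.cast_nonneg) (neg_nonpos.mpr (inv_nonneg.mpr hr))

lemma borderlineSeq_ne_top (r : ℝ) (n : ℕ) : borderlineSeq r n ≠ ∞ := ENNReal.ofReal_ne_top

lemma ellNorm'_borderlineSeq_lt_top_iff {p r : ℝ} (hp : 0 < p) (hr : 0 < r) :
    ellNorm' p (borderlineSeq r) < ∞ ↔ r < p := by
  have hpow (n : ℕ) : borderlineSeq r n ^ p = ENNReal.ofReal (((n : ℝ) + 1) ^ (-(p / r))) := by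
    rw [borderlineSeq, ENNReal.ofReal_rpow_of_nonneg (by positivity) hp.le,
      ← Real.rpow_mul (by positivity)]
    congr 2
    ring
  rw [ellNorm'_lt_top_iff hp, tsum_congr hpow, tsum_ofReal_nat_add_one_rpow_neg_lt_top_iff,
    one_lt_div hr]

lemma ellNorm_borderlineSeq_lt_top {q : ℝ≥0∞} {r : ℝ} (hr : 0 < r) (hrq : ENNReal.ofReal r < q) :
    ellNorm q (borderlineSeq r) < ∞ := by
  unfold ellNorm
  split_ifs with h
  · exact (iSup_le (borderlineSeq_le_one hr.le)).trans_lt ENNReal.one_lt_top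
  · have hrq' : r < q.toReal := (ENNReal.ofReal_lt_iff_lt_toReal hr.le h).mp hrq
    exact (ellNorm'_borderlineSeq_lt_top_iff (hr.trans hrq') hr).mpr hrq'

lemma Complex.enorm_ofReal_toReal {x : ℝ≥0∞} (hx : x ≠ ∞) : ‖((x.toReal : ℝ) : ℂ)‖ₑ = x := by
  rw [← ofReal_norm, Complex.norm_real, Real.norm_of_nonneg ENNReal.toReal_nonneg,
    ENNReal.ofReal_toReal hx]

section BesovNorm

variable (N : MultiscaleGrid Γ T d)

lemma besovNorm_eq_ellNorm (α p : ℝ) (q : ℝ≥0∞) (a : ℕ → Γ × T → ℂ) :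
    besovNorm N α p q a = ellNorm q (fun j => besovWeight d α p j * levelNorm N p a j) := rfl

lemma levelNorm_anti {p₀ p₁ : ℝ} (hp₀ : 0 < p₀) (hp : p₀ ≤ p₁) (a : ℕ → Γ × T → ℂ) (j : ℕ) :
    levelNorm N p₁ a j ≤ levelNorm N p₀ a j :=
  ellNorm'_anti hp₀ hp _

lemma besovWeight_ne_zero (α p : ℝ) (j : ℕ) : besovWeight d α p j ≠ 0 :=
  (ENNReal.ofReal_pos.mpr (by positivity)).ne'

lemma besovWeight_ne_top (α p : ℝ) (j : ℕ) : besovWeight d α p j ≠ ∞ := ENNReal.ofReal_ne_top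

lemma besovWeight_eq_mul (α γ p₀ p₁ : ℝ) (j : ℕ) :
    besovWeight d α p₁ j = ENNReal.ofReal (2 ^ ((j : ℝ) * (d * (1 / p₀ - 1 / p₁) - γ))) *
      besovWeight d (α + γ) p₀ j := by
  rw [besovWeight, besovWeight, ← ENNReal.ofReal_mul (by positivity), ← Real.rpow_add two_pos]
  congr 2
  ring

lemma besovWeight_mul_levelNorm_le {p₀ p₁ : ℝ} (hp₀ : 0 < p₀) (hp : p₀ ≤ p₁) (α γ : ℝ)
    (a : ℕ → Γ × T → ℂ) (j : ℕ) :
    besovWeight d α p₁ j * levelNorm N p₁ a j ≤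
      ENNReal.ofReal (2 ^ ((j : ℝ) * (d * (1 / p₀ - 1 / p₁) - γ))) *
        (besovWeight d (α + γ) p₀ j * levelNorm N p₀ a j) := by
  rw [besovWeight_eq_mul α γ p₀ p₁, mul_assoc]
  gcongr
  exact levelNorm_anti N hp₀ hp a j

end BesovNorm

section Embedding

variable (N : MultiscaleGrid Γ T d) {p₀ p₁ : ℝ} {q₀ q₁ : ℝ≥0∞} {α γ : ℝ}

lemma besovNorm_le_of_gap_eq_zero (hp₀ : 0 < p₀) (hp : p₀ ≤ p₁) (hq₀ : 0 < q₀) (hq : q₀ ≤ q₁)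
    (hγ : γ = d * (1 / p₀ - 1 / p₁)) (a : ℕ → Γ × T → ℂ) :
    besovNorm N α p₁ q₁ a ≤ besovNorm N (α + γ) p₀ q₀ a :=
  calc besovNorm N α p₁ q₁ a
      ≤ ellNorm q₁ (fun j => besovWeight d (α + γ) p₀ j * levelNorm N p₀ a j) :=
        ellNorm_mono fun j => by
          simpa [hγ] using besovWeight_mul_levelNorm_le N hp₀ hp α γ a j
    _ ≤ besovNorm N (α + γ) p₀ q₀ a := ellNorm_anti hq₀ hq _

lemma exists_besovNorm_le_mul_of_gap_pos (hp₀ : 0 < p₀) (hp : p₀ ≤ p₁) (hq₀ : 0 < q₀)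
    (hq₁ : 0 < q₁) (hγ : d * (1 / p₀ - 1 / p₁) < γ) :
    ∃ c : ℝ, 0 < c ∧ ∀ a : ℕ → Γ × T → ℂ,
      besovNorm N α p₁ q₁ a ≤ ENNReal.ofReal c * besovNorm N (α + γ) p₀ q₀ a := by
  set x := d * (1 / p₀ - 1 / p₁) - γ
  set C := ellNorm q₁ (fun j : ℕ => ENNReal.ofReal (2 ^ ((j : ℝ) * x)))
  have hC : C ≠ ∞ := (ellNorm_two_rpow_lt_top hq₁ (by linarith)).ne
  refine ⟨C.toReal + 1, by positivity, fun a => ?_⟩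
  calc besovNorm N α p₁ q₁ a
      ≤ ellNorm q₁ (fun j : ℕ => ENNReal.ofReal (2 ^ ((j : ℝ) * x)) *
          besovNorm N (α + γ) p₀ q₀ a) :=
        ellNorm_mono fun j => (besovWeight_mul_levelNorm_le N hp₀ hp α γ a j).trans
          (mul_le_mul_right (le_ellNorm hq₀ _ j) _)
    _ = C * besovNorm N (α + γ) p₀ q₀ a := ellNorm_mul_const hq₁ _ _
    _ ≤ ENNReal.ofReal (C.toReal + 1) * besovNorm N (α + γ) p₀ q₀ a := by
        gcongr
        exact (ENNReal.le_ofReal_iff_toReal_le hC (by positivity)).mpr (by linarith)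

lemma max_zero_one_div_sub_one_div (hp₀ : 0 < p₀) (hp : p₀ ≤ p₁) :
    max 0 (1 / p₀ - 1 / p₁) = 1 / p₀ - 1 / p₁ :=
  max_eq_right (sub_nonneg.mpr (one_div_le_one_div_of_le hp₀ hp))

theorem exists_besovNorm_le_mul (hp₀ : 0 < p₀) (hq₀ : 0 < q₀) (hq₁ : 0 < q₁)
    (h : p₀ ≤ p₁ ∧ (d * max 0 (1 / p₀ - 1 / p₁) < γ ∨
      (γ = d * max 0 (1 / p₀ - 1 / p₁) ∧ q₀ ≤ q₁))) :
    ∃ c : ℝ, 0 < c ∧ ∀ a : ℕ → Γ × T → ℂ,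
      besovNorm N α p₁ q₁ a ≤ ENNReal.ofReal c * besovNorm N (α + γ) p₀ q₀ a := by
  obtain ⟨hp, hγ⟩ := h
  rw [max_zero_one_div_sub_one_div hp₀ hp] at hγ
  rcases hγ with hγ | ⟨hγ, hq⟩
  · exact exists_besovNorm_le_mul_of_gap_pos N hp₀ hp hq₀ hq₁ hγ
  · refine ⟨1, one_pos, fun a => ?_⟩
    rw [ENNReal.ofReal_one, one_mul]
    exact besovNorm_le_of_gap_eq_zero N hp₀ hp hq₀ hq hγ a

end Embedding

section TestSequences

variable (N : MultiscaleGrid Γ T d)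

open Classical in
def ofLevels (w : ∀ j, N.grid j → ℂ) : ℕ → Γ × T → ℂ :=
  fun j x => if hx : x ∈ N.grid j then w j ⟨x, hx⟩ else 0

lemma besovNorm_ofLevels (w : ∀ j, N.grid j → ℂ) (α p : ℝ) (q : ℝ≥0∞) :
    besovNorm N α p q (ofLevels N w) =
      ellNorm q (fun j => besovWeight d α p j * ellNorm' p (fun ξ => ‖w j ξ‖ₑ)) := by
  simp only [besovNorm_eq_ellNorm, levelNorm, ofLevels, Subtype.coe_prop, dif_pos]
  rfl

lemma exists_besovNorm_eq_ellNorm (hne : ∀ j, (N.grid j).Nonempty) (v : ℕ → ℝ≥0∞)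
    (hv : ∀ j, v j ≠ ∞) :
    ∃ a : ℕ → Γ × T → ℂ, ∀ (α p : ℝ) (q : ℝ≥0∞), 0 < p →
      besovNorm N α p q a = ellNorm q (fun j => besovWeight d α p j * v j) := by
  classical
  let ξ (j : ℕ) : N.grid j := ⟨(hne j).some, (hne j).some_mem⟩
  refine ⟨ofLevels N fun j => Pi.single (ξ j) ((v j).toReal : ℂ), fun α p q hp => ?_⟩
  rw [besovNorm_ofLevels]
  congr 1 with j
  conv_rhs => rw [← ellNorm'_single hp (ξ j) (v j)]
  congr 2 with η
  rw [Pi.apply_single (fun _ => enorm) (fun _ => enorm_zero) (ξ j) _ η,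
    Complex.enorm_ofReal_toReal (hv j)]

lemma exists_besovNorm_eq_ellNorm' (h₀ : (N.grid 0).Infinite) (v : ℕ → ℝ≥0∞)
    (hv : ∀ n, v n ≠ ∞) :
    ∃ a : ℕ → Γ × T → ℂ, ∀ (α p : ℝ) (q : ℝ≥0∞), 0 < p → 0 < q →
      besovNorm N α p q a = ellNorm' p v := by
  classical
  let e := h₀.natEmbedding
  let w : ∀ j, N.grid j → ℂ := Pi.single 0 (extend e (fun n => ((v n).toReal : ℂ)) 0)
  refine ⟨ofLevels N w, fun α p q hp hq => ?_⟩
  rw [besovNorm_ofLevels, ← ellNorm_single hq 0 (ellNorm' p v)]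
  congr 1 with j
  rcases j with _ | j
  · have : (fun ξ => ‖extend e (fun n => ((v n).toReal : ℂ)) 0 ξ‖ₑ) = extend e v 0 := by
      ext ξ
      rw [apply_extend enorm]
      simp [comp_def, Complex.enorm_ofReal_toReal (hv _)]
      rfl
    simp [w, this, besovWeight, ellNorm'_extend_zero hp e.injective]
  · simp [w, ellNorm', ENNReal.zero_rpow_of_pos hp, hp]

end TestSequences

section Counterexamples

variable (N : MultiscaleGrid Γ T d) {p₀ p₁ : ℝ} {q₀ q₁ : ℝ≥0∞} {α γ : ℝ}

lemma exists_besovNorm_lt_top_eq_top_of_lt (h₀ : (N.grid 0).Infinite) (hp₁ : 0 < p₁)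
    (hp : p₁ < p₀) (hq₀ : 0 < q₀) (hq₁ : 0 < q₁) :
    ∃ a : ℕ → Γ × T → ℂ, besovNorm N (α + γ) p₀ q₀ a < ∞ ∧ besovNorm N α p₁ q₁ a = ∞ := by
  obtain ⟨a, ha⟩ := exists_besovNorm_eq_ellNorm' N h₀ (borderlineSeq p₁) (borderlineSeq_ne_top p₁)
  refine ⟨a, ?_, ?_⟩
  · rw [ha _ _ _ (hp₁.trans hp) hq₀]
    exact (ellNorm'_borderlineSeq_lt_top_iff (hp₁.trans hp) hp₁).mpr hp
  · rw [ha _ _ _ hp₁ hq₁]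
    exact not_lt_top_iff.mp ((ellNorm'_borderlineSeq_lt_top_iff hp₁ hp₁).not.mpr (lt_irrefl _))

lemma exists_besovNorm_eq_ellNorm_weight_ratio (hne : ∀ j, (N.grid j).Nonempty) (hp₀ : 0 < p₀)
    (hp₁ : 0 < p₁) (u : ℕ → ℝ≥0∞) (hu : ∀ j, u j ≠ ∞) :
    ∃ a : ℕ → Γ × T → ℂ, besovNorm N (α + γ) p₀ q₀ a = ellNorm q₀ u ∧
      besovNorm N α p₁ q₁ a = ellNorm q₁ (fun j : ℕ =>
        ENNReal.ofReal (2 ^ ((j : ℝ) * (d * (1 / p₀ - 1 / p₁) - γ))) * u j) := by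
  obtain ⟨a, ha⟩ := exists_besovNorm_eq_ellNorm N hne
    (fun j => (besovWeight d (α + γ) p₀ j)⁻¹ * u j)
    (fun j => ENNReal.mul_ne_top (ENNReal.inv_ne_top.mpr (besovWeight_ne_zero _ _ j)) (hu j))
  have hcancel (j : ℕ) :
      besovWeight d (α + γ) p₀ j * ((besovWeight d (α + γ) p₀ j)⁻¹ * u j) = u j :=
    ENNReal.mul_inv_cancel_left (besovWeight_ne_zero _ _ j) (besovWeight_ne_top _ _ j)
  refine ⟨a, by simp only [ha _ _ _ hp₀, hcancel], ?_⟩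
  simp only [ha _ _ _ hp₁, besovWeight_eq_mul α γ p₀ p₁, mul_assoc, hcancel]

lemma exists_besovNorm_lt_top_eq_top_of_gap_neg (hne : ∀ j, (N.grid j).Nonempty)
    (hp₀ : 0 < p₀) (hp₁ : 0 < p₁) (hq₀ : 0 < q₀) (hq₁ : 0 < q₁)
    (hγ : γ < d * (1 / p₀ - 1 / p₁)) :
    ∃ a : ℕ → Γ × T → ℂ, besovNorm N (α + γ) p₀ q₀ a < ∞ ∧ besovNorm N α p₁ q₁ a = ∞ := by
  set x := d * (1 / p₀ - 1 / p₁) - γ with hx_def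
  have hx : 0 < x := sub_pos.mpr hγ
  obtain ⟨a, h₀, h₁⟩ := exists_besovNorm_eq_ellNorm_weight_ratio N (α := α) (q₀ := q₀) (q₁ := q₁)
    hne hp₀ hp₁ (fun j => ENNReal.ofReal (2 ^ ((j : ℝ) * -(x / 2)))) fun _ => ENNReal.ofReal_ne_top
  rw [← hx_def] at h₁
  have hgrowth (j : ℕ) :
      ENNReal.ofReal (2 ^ ((j : ℝ) * x)) * ENNReal.ofReal (2 ^ ((j : ℝ) * -(x / 2))) =
        ENNReal.ofReal (2 ^ ((j : ℝ) * (x / 2))) := by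
    rw [← ENNReal.ofReal_mul (by positivity), ← Real.rpow_add two_pos]
    congr 2
    ring
  refine ⟨a, h₀ ▸ ellNorm_two_rpow_lt_top hq₀ (by linarith), top_unique ?_⟩
  simp only [h₁, hgrowth]
  exact (iSup_two_rpow_eq_top (half_pos hx)).ge.trans (iSup_le_ellNorm hq₁ _)

lemma exists_besovNorm_lt_top_eq_top_of_gap_eq_zero (hne : ∀ j, (N.grid j).Nonempty)
    (hp₀ : 0 < p₀) (hp₁ : 0 < p₁) (hq₁ : 0 < q₁) (hq : q₁ < q₀)
    (hγ : γ = d * (1 / p₀ - 1 / p₁)) :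
    ∃ a : ℕ → Γ × T → ℂ, besovNorm N (α + γ) p₀ q₀ a < ∞ ∧ besovNorm N α p₁ q₁ a = ∞ := by
  have hq₁top : q₁ ≠ ∞ := hq.ne_top
  have hr : 0 < q₁.toReal := ENNReal.toReal_pos hq₁.ne' hq₁top
  obtain ⟨a, h₀, h₁⟩ := exists_besovNorm_eq_ellNorm_weight_ratio N (α := α) (γ := γ) (q₀ := q₀)
    (q₁ := q₁) hne hp₀ hp₁ (borderlineSeq q₁.toReal) (borderlineSeq_ne_top _)
  refine ⟨a, h₀ ▸ ellNorm_borderlineSeq_lt_top hr (by rwa [ENNReal.ofReal_toReal hq₁top]), ?_⟩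
  simp only [h₁, hγ, sub_self, mul_zero, Real.rpow_zero, ENNReal.ofReal_one, one_mul, ellNorm,
    if_neg hq₁top]
  exact not_lt_top_iff.mp ((ellNorm'_borderlineSeq_lt_top_iff hr hr).not.mpr (lt_irrefl _))

theorem exists_besovNorm_lt_top_eq_top (hA4b : A4b N) (hp₀ : 0 < p₀) (hp₁ : 0 < p₁)
    (hq₀ : 0 < q₀) (hq₁ : 0 < q₁)
    (h : ¬ (p₀ ≤ p₁ ∧ (d * max 0 (1 / p₀ - 1 / p₁) < γ ∨
      (γ = d * max 0 (1 / p₀ - 1 / p₁) ∧ q₀ ≤ q₁)))) :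
    ∃ a : ℕ → Γ × T → ℂ, besovNorm N (α + γ) p₀ q₀ a < ∞ ∧ besovNorm N α p₁ q₁ a = ∞ := by
  have hne (j : ℕ) : (N.grid j).Nonempty := (hA4b j).nonempty
  rcases lt_or_ge p₁ p₀ with hp | hp
  · exact exists_besovNorm_lt_top_eq_top_of_lt N (hA4b 0) hp₁ hp hq₀ hq₁
  rw [max_zero_one_div_sub_one_div hp₀ hp] at h
  simp only [not_and, not_or, not_lt, not_le] at h
  obtain ⟨hγ, hq⟩ := h hp
  rcases hγ.lt_or_eq with hγ | hγ
  · exact exists_besovNorm_lt_top_eq_top_of_gap_neg N hne hp₀ hp₁ hq₀ hq₁ hγ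
  · exact exists_besovNorm_lt_top_eq_top_of_gap_eq_zero N hne hp₀ hp₁ hq₁ (hq hγ) hγ

end Counterexamples

theorem besov_seq_embedding_unbounded_general
    {Γ T : Type*} [MetricSpace Γ] [Fintype T] [Nonempty T]
    {d : ℕ} (N : MultiscaleGrid Γ T d) (hA4b : A4b N)
    (p₀ p₁ : ℝ) (hp₀ : 0 < p₀) (hp₁ : 0 < p₁)
    (q₀ q₁ : ℝ≥0∞) (hq₀ : 0 < q₀) (hq₁ : 0 < q₁) (α γ : ℝ) :
    (besovSpace N (α + γ) p₀ q₀ ⊆ besovSpace N α p₁ q₁ ↔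
      (p₀ ≤ p₁ ∧ (d * max 0 (1 / p₀ - 1 / p₁) < γ ∨
        (γ = d * max 0 (1 / p₀ - 1 / p₁) ∧ q₀ ≤ q₁)))) ∧
    ((∃ c : ℝ, 0 < c ∧ ∀ a : ℕ → Γ × T → ℂ,
        besovNorm N α p₁ q₁ a ≤ ENNReal.ofReal c * besovNorm N (α + γ) p₀ q₀ a) ↔
      (p₀ ≤ p₁ ∧ (d * max 0 (1 / p₀ - 1 / p₁) < γ ∨
        (γ = d * max 0 (1 / p₀ - 1 / p₁) ∧ q₀ ≤ q₁)))) := by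
  have hsuff := exists_besovNorm_le_mul N (p₁ := p₁) (α := α) (γ := γ) hp₀ hq₀ hq₁
  have hnec := exists_besovNorm_lt_top_eq_top N (α := α) (γ := γ) hA4b hp₀ hp₁ hq₀ hq₁
  refine ⟨⟨fun hsub => ?_, fun h a ha => ?_⟩, ⟨fun ⟨c, _, hc⟩ => ?_, hsuff⟩⟩
  · by_contra h
    obtain ⟨a, h₀, h₁⟩ := hnec h
    exact (hsub h₀).ne h₁
  · obtain ⟨c, -, hc⟩ := hsuff h
    exact (hc a).trans_lt (ENNReal.mul_lt_top ENNReal.ofReal_lt_top ha)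
  · by_contra h
    obtain ⟨a, h₀, h₁⟩ := hnec h
    exact ((hc a).trans_lt (ENNReal.mul_lt_top ENNReal.ofReal_lt_top h₀)).ne h₁

/-- Proposition 2.4, unbounded case: for a multiscale grid satisfying (A4b), the embedding
`b^{α+γ}_{p₀,q₀}(∇) ⊆ b^{α}_{p₁,q₁}(∇)` exists as a set-theoretic inclusion iff it is
continuous iff `p₀ ≤ p₁` and in addition `γ > d·max{0, 1/p₀ − 1/p₁}`, or
`γ = d·max{0, 1/p₀ − 1/p₁}` with `q₀ ≤ q₁`. -/
theorem besov_seq_embedding_unbounded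
    {Γ T : Type*} [MetricSpace Γ] [Nonempty Γ] [Fintype T] [Nonempty T]
    {d : ℕ} (hd : 0 < d) (N : MultiscaleGrid Γ T d) (hA4b : A4b N)
    (p₀ p₁ : ℝ) (hp₀ : 0 < p₀) (hp₁ : 0 < p₁)
    (q₀ q₁ : ℝ≥0∞) (hq₀ : 0 < q₀) (hq₁ : 0 < q₁) (α γ : ℝ) :
    (besovSpace N (α + γ) p₀ q₀ ⊆ besovSpace N α p₁ q₁ ↔
      (p₀ ≤ p₁ ∧ (d * max 0 (1 / p₀ - 1 / p₁) < γ ∨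
        (γ = d * max 0 (1 / p₀ - 1 / p₁) ∧ q₀ ≤ q₁)))) ∧
    ((∃ c : ℝ, 0 < c ∧ ∀ a : ℕ → Γ × T → ℂ,
        besovNorm N α p₁ q₁ a ≤ ENNReal.ofReal c * besovNorm N (α + γ) p₀ q₀ a) ↔
      (p₀ ≤ p₁ ∧ (d * max 0 (1 / p₀ - 1 / p₁) < γ ∨
        (γ = d * max 0 (1 / p₀ - 1 / p₁) ∧ q₀ ≤ q₁)))) :=
  besov_seq_embedding_unbounded_general N hA4b p₀ p₁ hp₀ hp₁ q₀ q₁ hq₀ hq₁ α γ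
end
end

section
/- Let ∇⁰,∇¹ be multiscale grids of dimension d∈ℕ for Γ, let 0<p≤1, and let M = {m_{(j,ξ),(k,η)}} satisfy the ad^{0,0}_p condition with a witness ε>0. Let r satisfy pd/(εp+d) < r < p, and define M̃ = M̃(r) by m̃_{(j,ξ),(k,η)} := 2^{(k−j)d(1/2−r/2)}·|m_{(j,ξ),(k,η)}|^r. Then M̃ belongs to ad^{0,0}_{p/r}, with witness ε̃ := εr + d(r/p − 1) > 0. -/
open scoped ENNReal NNReal BigOperators

noncomputable section

variable {Γ T : Type*} [MetricSpace Γ] [Fintype T] [Nonempty T] {d : ℕ}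

/-! Since `p ≤ 1 < p / r`, we have `σ_p = d (1/p - 1)` and `σ_{p/r} = 0`, hence
`(d + ε + σ_p) r = d + ε̃ + σ_{p/r}`: the `r`-th power of the spatial factor
`(1 + 2^{min(j,k)} dist(ξ,η))^{-(d+ε+σ_p)}` is exactly the one required for `ε̃`. In the scale
factor, the rescaling `2^{(k-j) d (1-r)/2}` turns the `r`-th power of `2^{(j-k)(d/2+ε+σ_p)}`
(relevant for `j ≤ k`) into exactly `2^{(j-k)(d/2+ε̃+σ_{p/r})}`, and that of `2^{-(j-k)(d/2+ε)}`
(relevant for `j ≥ k`) into `2^{-(j-k)(d/2+εr)}`, which suffices because `ε̃ ≤ εr`. -/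

lemma sigmaP_nonneg (d : ℕ) (p : ℝ) : 0 ≤ sigmaP d p :=
  mul_nonneg (Nat.cast_nonneg d) (le_max_right _ _)

lemma sigmaP_of_le_one {p : ℝ} (hp0 : 0 < p) (hp1 : p ≤ 1) : sigmaP d p = d * (1 / p - 1) := by
  rw [sigmaP, max_eq_left (sub_nonneg.mpr (one_le_one_div hp0 hp1))]

lemma sigmaP_of_one_le {p : ℝ} (hp : 1 ≤ p) : sigmaP d p = 0 := by
  rw [sigmaP, max_eq_right (sub_nonpos.mpr (div_le_one_of_le₀ hp (by linarith))), mul_zero]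

lemma two_pow_mul_min_rpow_le {d ε ε' σ σ' r t : ℝ} (hr : 0 ≤ r) (hε' : 0 ≤ d / 2 + ε')
    (hε'r : ε' ≤ ε * r) (hσ' : 0 ≤ σ') (hexp : (d + ε + σ) * r = d + ε' + σ') :
    (2 : ℝ) ^ (-t * d * (1 / 2 - r / 2)) *
        min ((2 : ℝ) ^ (-t * (d / 2 + ε))) ((2 : ℝ) ^ (t * (d / 2 + ε + σ))) ^ r ≤
      min ((2 : ℝ) ^ (-t * (d / 2 + ε'))) ((2 : ℝ) ^ (t * (d / 2 + ε' + σ'))) := by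
  have h2 : (1 : ℝ) ≤ 2 := one_le_two
  have hscale : ∀ a : ℝ, (2 : ℝ) ^ (-t * d * (1 / 2 - r / 2)) * ((2 : ℝ) ^ a) ^ r =
      (2 : ℝ) ^ (-t * d * (1 / 2 - r / 2) + a * r) := by
    intro a
    rw [← Real.rpow_mul zero_le_two, ← Real.rpow_add two_pos]
  rcases le_total 0 t with ht | ht
  · calc _ ≤ (2 : ℝ) ^ (-t * d * (1 / 2 - r / 2)) * ((2 : ℝ) ^ (-t * (d / 2 + ε))) ^ r := by
          gcongr; exact min_le_left _ _
      _ ≤ (2 : ℝ) ^ (-t * (d / 2 + ε')) := by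
          rw [hscale]
          exact Real.rpow_le_rpow_of_exponent_le h2 (by nlinarith)
      _ ≤ _ := le_min le_rfl (Real.rpow_le_rpow_of_exponent_le h2 (by nlinarith))
  · calc _ ≤ (2 : ℝ) ^ (-t * d * (1 / 2 - r / 2)) * ((2 : ℝ) ^ (t * (d / 2 + ε + σ))) ^ r := by
          gcongr; exact min_le_right _ _
      _ = (2 : ℝ) ^ (t * (d / 2 + ε' + σ')) := by
          rw [hscale]; congr 1; linear_combination t * hexp
      _ ≤ _ := le_min (Real.rpow_le_rpow_of_exponent_le h2 (by nlinarith)) le_rfl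

lemma adWeight_nonneg {Γ T : Type*} [MetricSpace Γ] (d : ℕ) (p α₀ α₁ ε : ℝ) (j : ℕ) (ξ : Γ × T)
    (k : ℕ) (η : Γ × T) :
    0 ≤ adWeight d p α₀ α₁ ε j ξ k η := by
  unfold adWeight
  positivity

lemma two_pow_mul_adWeight_rpow_le {Γ T : Type*} [MetricSpace Γ] {d : ℕ} {p q ε ε' r : ℝ}
    (hr : 0 ≤ r) (hε' : 0 ≤ ε') (hε'r : ε' ≤ ε * r)
    (hexp : (d + ε + sigmaP d p) * r = d + ε' + sigmaP d q)
    (j : ℕ) (ξ : Γ × T) (k : ℕ) (η : Γ × T) :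
    (2 : ℝ) ^ (((k : ℝ) - j) * d * (1 / 2 - r / 2)) * adWeight d p 0 0 ε j ξ k η ^ r ≤
      adWeight d q 0 0 ε' j ξ k η := by
  set D := 1 + min ((2 : ℝ) ^ k) ((2 : ℝ) ^ j) * dist ξ.1 η.1
  have hD : 1 ≤ D := le_add_of_nonneg_right (by positivity)
  have hD0 : 0 ≤ D := zero_le_one.trans hD
  simp only [adWeight, mul_zero, sub_zero, Real.rpow_zero, one_mul]
  rw [Real.div_rpow (by positivity) (by positivity), ← Real.rpow_mul hD0, hexp, mul_div_assoc',
    div_le_div_iff_of_pos_right (by positivity), show ((k : ℝ) - j) = -(j - k) by ring]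
  exact two_pow_mul_min_rpow_le hr (by positivity) hε'r (sigmaP_nonneg d q) hexp

lemma adBound.rpow_rescale {N0 N1 : MultiscaleGrid Γ T d} {p q ε ε' C r : ℝ}
    {m : ℕ → Γ × T → ℕ → Γ × T → ℂ} (hm : adBound N0 N1 0 0 p ε C m) (hC : 0 ≤ C)
    (hr : 0 ≤ r) (hε' : 0 ≤ ε') (hε'r : ε' ≤ ε * r)
    (hexp : (d + ε + sigmaP d p) * r = d + ε' + sigmaP d q) :
    adBound N0 N1 0 0 q ε' (C ^ r) (fun j ξ k η =>
      ((((2 : ℝ) ^ ((((k : ℝ) - (j : ℝ)) * d) * (1 / 2 - r / 2)) *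
        ‖m j ξ k η‖ ^ r : ℝ) : ℂ))) := by
  intro j ξ hξ k η hη
  set s : ℝ := (2 : ℝ) ^ (((k : ℝ) - j) * d * (1 / 2 - r / 2))
  rw [Complex.norm_real, Real.norm_of_nonneg (by positivity)]
  calc s * ‖m j ξ k η‖ ^ r ≤ s * (C * adWeight d p 0 0 ε j ξ k η) ^ r := by
        gcongr; exact hm j ξ hξ k η hη
    _ = C ^ r * (s * adWeight d p 0 0 ε j ξ k η ^ r) := by
        rw [Real.mul_rpow hC (adWeight_nonneg ..)]; ring
    _ ≤ C ^ r * adWeight d q 0 0 ε' j ξ k η := by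
        gcongr; exact two_pow_mul_adWeight_rpow_le hr hε' hε'r hexp j ξ k η

theorem almost_diagonal_power_trick_general
    {Γ T : Type*} [MetricSpace Γ] [Fintype T] [Nonempty T]
    {d : ℕ} (N0 N1 : MultiscaleGrid Γ T d)
    (p : ℝ) (hp0 : 0 < p) (hp1 : p ≤ 1) (ε : ℝ) (hε : 0 < ε)
    (m : ℕ → Γ × T → ℕ → Γ × T → ℂ)
    (hm : ∃ C > 0, adBound N0 N1 0 0 p ε C m)
    (r : ℝ) (hr1 : p * d / (ε * p + d) < r) (hr2 : r < p) :
    0 < ε * r + d * (r / p - 1) ∧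
    ∃ C > 0, adBound N0 N1 0 0 (p / r) (ε * r + d * (r / p - 1)) C
      (fun j ξ k η =>
        ((((2 : ℝ) ^ ((((k : ℝ) - (j : ℝ)) * d) * (1 / 2 - r / 2)) *
            ‖m j ξ k η‖ ^ r : ℝ) : ℂ))) := by
  obtain ⟨C, hC, hbd⟩ := hm
  have hr0 : 0 < r := lt_of_le_of_lt (by positivity) hr1
  have hε' : 0 < ε * r + d * (r / p - 1) := by
    have hpd : p * d < r * (ε * p + d) := (div_lt_iff₀ (by positivity)).mp hr1
    have hε'_eq : ε * r + d * (r / p - 1) = (r * (ε * p + d) - p * d) / p := by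
      field_simp; ring
    rw [hε'_eq]
    exact div_pos (sub_pos.mpr hpd) hp0
  have hε'r : ε * r + d * (r / p - 1) ≤ ε * r := by
    have hrp : r / p ≤ 1 := (div_le_one hp0).mpr hr2.le
    nlinarith [(Nat.cast_nonneg d : (0 : ℝ) ≤ d)]
  have hexp : (d + ε + sigmaP d p) * r = d + (ε * r + d * (r / p - 1)) + sigmaP d (p / r) := by
    rw [sigmaP_of_le_one hp0 hp1, sigmaP_of_one_le ((one_le_div hr0).mpr hr2.le)]
    field_simp; ring
  exact ⟨hε', C ^ r, by positivity, hbd.rpow_rescale hC.le hr0.le hε'.le hε'r hexp⟩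

/-- Step 2 in the proof of Theorem 2.7: if `M` satisfies the `ad^{0,0}_p` condition with
witness `ε > 0` and `pd/(εp+d) < r < p ≤ 1`, then the modified matrix
`m̃ = 2^{(k−j)d(1/2−r/2)}|m|^r` satisfies the `ad^{0,0}_{p/r}` condition with witness
`ε̃ = εr + d(r/p − 1) > 0`. -/
theorem almost_diagonal_power_trick
    {Γ T : Type*} [MetricSpace Γ] [Nonempty Γ] [Fintype T] [Nonempty T]
    {d : ℕ} (hd : 0 < d) (N0 N1 : MultiscaleGrid Γ T d)
    (p : ℝ) (hp0 : 0 < p) (hp1 : p ≤ 1) (ε : ℝ) (hε : 0 < ε)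
    (m : ℕ → Γ × T → ℕ → Γ × T → ℂ)
    (hm : ∃ C > 0, adBound N0 N1 0 0 p ε C m)
    (r : ℝ) (hr1 : p * d / (ε * p + d) < r) (hr2 : r < p) :
    0 < ε * r + d * (r / p - 1) ∧
    ∃ C > 0, adBound N0 N1 0 0 (p / r) (ε * r + d * (r / p - 1)) C
      (fun j ξ k η =>
        ((((2 : ℝ) ^ ((((k : ℝ) - (j : ℝ)) * d) * (1 / 2 - r / 2)) *
            ‖m j ξ k η‖ ^ r : ℝ) : ℂ))) :=
  almost_diagonal_power_trick_general N0 N1 p hp0 hp1 ε hε m hm r hr1 hr2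
end
end
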